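/- Fix c ≥ 1 and k ≥ 0. The map sending a multiset of arc diagrams on {0,…,c+1} to the multiset union of their signed arcs restricts to a bijection from the collection of multisets of cardinality k of arc diagrams that are stacked (the underlying diagrams have pairwise nested bipartitions) onto the collection of consistent multisets of signed arcs of rank k. -/

import Mathlib

namespace PaperDKK

/-- A signed arc on `{0,…,c+1}` : `(i, j, σ)` with `i < j` and a sign
(`true` = `+`, i.e. top; `false` = `−`, i.e. bottom). -/
abbrev SArc : Type := ℕ × ℕ × Bool

/-- Validity of an arc on `{0,…,c+1}`. -/
def ValidArc (c : ℕ) (x : SArc) : Prop := x.1 < x.2.1 ∧ x.2.1 ≤ c + 1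

/-- An arc diagram on `{0,…,c+1}` : a sequence of arcs
`(0,i_1,σ_1), (i_1,i_2,σ_2), …, (i_{ℓ−1}, c+1, σ_ℓ)` with alternating signs. -/
def IsArcDiagram (c : ℕ) (d : List SArc) : Prop :=
  d ≠ [] ∧
  (∀ x ∈ d.head?, x.1 = 0) ∧
  (∀ x ∈ d.getLast?, x.2.1 = c + 1) ∧
  List.Chain' (fun x y => x.2.1 = y.1 ∧ x.2.2 ≠ y.2.2) d ∧
  ∀ x ∈ d, x.1 < x.2.1

/-- Two arcs of the same sign cross if they interleave: `i < k ≤ j < l`. -/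
def Cross (x y : SArc) : Prop :=
  x.2.2 = y.2.2 ∧
  ((x.1 < y.1 ∧ y.1 ≤ x.2.1 ∧ x.2.1 < y.2.1) ∨
   (y.1 < x.1 ∧ x.1 ≤ y.2.1 ∧ y.2.1 < x.2.1))

/-- Two arc diagrams cross if some arc of one crosses some arc of the other. -/
def DiagCross (d₁ d₂ : List SArc) : Prop := ∃ x ∈ d₁, ∃ y ∈ d₂, Cross x y

/-- Two arc diagrams interfere if they contain segments
`(a,i_0)^{σ_0}, (i_0,i_1)^{σ_1}, …, (i_{k−1},i_k)^{σ_k}, (i_k,b)^{σ_{k+1}}` and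
`(a′,i_0)^{σ_0}, (i_0,i_1)^{σ_1}, …, (i_{k−1},i_k)^{σ_k}, (i_k,b′)^{σ_{k+1}}`
with the same middle part, `a < a′` and `b < b′`. -/
def Interfere (d₁ d₂ : List SArc) : Prop :=
  ∃ (M : List SArc) (a a' b b' i j : ℕ) (σ τ : Bool),
    a < a' ∧ b < b' ∧
    ((a, i, σ) :: (M ++ [(j, b, τ)])) <:+: d₁ ∧
    ((a', i, σ) :: (M ++ [(j, b', τ)])) <:+: d₂

/-- The `A`-part of the bipartition of an arc diagram: the gaps `g` covered by a
`+` (top) arc. -/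
def Apart (c : ℕ) (d : List SArc) : Finset ℕ :=
  (Finset.Icc 1 (c + 1)).filter (fun g => ∃ x ∈ d, x.2.2 = true ∧ x.1 < g ∧ g ≤ x.2.1)

/-- A multiset of arc diagrams is stacked iff the bipartitions of its members are
pairwise nested, i.e. their `A`-parts are pairwise comparable under inclusion. -/
def Stacked (c : ℕ) (D : Multiset (List SArc)) : Prop :=
  ∀ d₁ ∈ D, ∀ d₂ ∈ D, Apart c d₁ ⊆ Apart c d₂ ∨ Apart c d₂ ⊆ Apart c d₁

/-- Consistency of a multiset of signed arcs: valid non-crossing arcs such that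
at each `x ∈ {1,…,c}` the number of incoming arcs equals the number of outgoing
arcs (with multiplicity). -/
def Consistent (c : ℕ) (A : Multiset SArc) : Prop :=
  (∀ x ∈ A, ValidArc c x) ∧
  (∀ x ∈ A, ∀ y ∈ A, ¬ Cross x y) ∧
  ∀ g : ℕ, 1 ≤ g → g ≤ c →
    Multiset.card (A.filter (fun x => x.2.1 = g)) =
      Multiset.card (A.filter (fun x => x.1 = g))

/-- The rank of a multiset of arcs: the number of arcs with left endpoint `0`
(with multiplicity). -/
def arcRank (A : Multiset SArc) : ℕ := Multiset.card (A.filter (fun x => x.1 = 0))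

/-- The multiset union of the arcs of a multiset of arc diagrams. -/
def arcsOf (D : Multiset (List SArc)) : Multiset SArc :=
  D.bind (fun l => (l : Multiset SArc))

/-- Generalized arc diagram from `a` to `b`. -/
def IsDiag (a b : ℕ) (d : List SArc) : Prop :=
  d ≠ [] ∧
  (∀ x ∈ d.head?, x.1 = a) ∧
  (∀ x ∈ d.getLast?, x.2.1 = b) ∧
  List.Chain' (fun x y => x.2.1 = y.1 ∧ x.2.2 ≠ y.2.2) d ∧
  ∀ x ∈ d, x.1 < x.2.1

lemma isArcDiagram_iff {c : ℕ} {d : List SArc} : IsArcDiagram c d ↔ IsDiag 0 (c+1) d := Iff.rfl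

lemma IsDiag.head1 {a b : ℕ} {x : SArc} {t : List SArc} (h : IsDiag a b (x :: t)) : x.1 = a :=
  h.2.1 x rfl

lemma IsDiag.strict {a b : ℕ} {d : List SArc} (h : IsDiag a b d) {x : SArc} (hx : x ∈ d) :
    x.1 < x.2.1 := h.2.2.2.2 x hx

lemma IsDiag.tail {a b : ℕ} {x : SArc} {t : List SArc} (h : IsDiag a b (x :: t)) :
    t = [] ∨ IsDiag x.2.1 b t := by
  obtain ⟨-, -, hlast, hchain, hstrict⟩ := h
  rcases t with _ | ⟨y, t⟩
  · exact Or.inl rfl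
  · refine Or.inr ⟨by simp, ?_, ?_, hchain.tail, fun z hz => hstrict z (List.mem_cons_of_mem _ hz)⟩
    · intro z hz
      simp only [List.head?_cons, Option.mem_def, Option.some.injEq] at hz
      subst hz
      exact ((List.isChain_cons_cons.mp hchain).1.1).symm
    · intro z hz
      apply hlast
      rwa [List.getLast?_cons_cons]

lemma IsDiag.chain_head {a b : ℕ} {x y : SArc} {t : List SArc}
    (h : IsDiag a b (x :: y :: t)) : x.2.1 = y.1 ∧ x.2.2 ≠ y.2.2 :=
  (List.isChain_cons_cons.mp h.2.2.2.1).1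

lemma diag_left_le {b : ℕ} {d : List SArc} :
    ∀ {a : ℕ}, IsDiag a b d → ∀ x ∈ d, a ≤ x.1 := by
  induction d with
  | nil => intro a _ x hx; simp at hx
  | cons z t ih =>
    intro a h x hx
    rcases List.mem_cons.mp hx with rfl | hx
    · exact h.head1.ge
    · rcases h.tail with rfl | ht
      · simp at hx
      · have h1 : z.1 = a := h.head1
        have h2 : z.1 < z.2.1 := h.strict (List.mem_cons_self)
        have h3 := ih ht x hx
        omega

lemma diag_right_le {b : ℕ} {d : List SArc} :
    ∀ {a : ℕ}, IsDiag a b d → ∀ x ∈ d, x.2.1 ≤ b := by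
  induction d with
  | nil => intro a _ x hx; simp at hx
  | cons z t ih =>
    intro a h x hx
    rcases h.tail with rfl | ht
    · rcases List.mem_cons.mp hx with rfl | hx
      · exact (h.2.2.1 x (by simp)).le
      · simp at hx
    · rcases List.mem_cons.mp hx with rfl | hx
      · rcases t with _ | ⟨y, t'⟩
        · exact absurd rfl ht.1
        · have h1 : x.2.1 = y.1 := h.chain_head.1
          have h2 : y.1 < y.2.1 := ht.strict (List.mem_cons_self)
          have h3 := ih ht y (List.mem_cons_self)
          omega
      · exact ih ht x hx

/-- unique arc covering a gap -/
lemma diag_cover_unique {b g : ℕ} {d : List SArc} :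
    ∀ {a : ℕ}, IsDiag a b d → ∀ x ∈ d, ∀ y ∈ d,
      x.1 < g → g ≤ x.2.1 → y.1 < g → g ≤ y.2.1 → x = y := by
  induction d with
  | nil => intro a _ x hx; simp at hx
  | cons z t ih =>
    intro a h x hx y hy hx1 hx2 hy1 hy2
    rcases h.tail with rfl | ht
    · simp only [List.mem_singleton] at hx hy; rw [hx, hy]
    · rcases List.mem_cons.mp hx with rfl | hx'
      · rcases List.mem_cons.mp hy with rfl | hy'
        · rfl
        · have := diag_left_le ht y hy'
          omega
      · rcases List.mem_cons.mp hy with rfl | hy'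
        · have := diag_left_le ht x hx'
          omega
        · exact ih ht x hx' y hy' hx1 hx2 hy1 hy2

lemma diag_cover_exists {b g : ℕ} {d : List SArc} :
    ∀ {a : ℕ}, IsDiag a b d → a < g → g ≤ b → ∃ x ∈ d, x.1 < g ∧ g ≤ x.2.1 := by
  induction d with
  | nil => intro a h; exact absurd rfl h.1
  | cons z t ih =>
    intro a h hg1 hg2
    by_cases hle : g ≤ z.2.1
    · exact ⟨z, List.mem_cons_self, h.head1 ▸ hg1, hle⟩
    · rcases h.tail with rfl | ht
      · exact absurd (h.2.2.1 z (by simp) ▸ hg2) hle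
      · obtain ⟨x, hx, h1, h2⟩ := ih ht (lt_of_not_ge hle) hg2
        exact ⟨x, List.mem_cons_of_mem _ hx, h1, h2⟩

lemma diag_pred {b : ℕ} {d : List SArc} :
    ∀ {a : ℕ}, IsDiag a b d → ∀ x ∈ d, a < x.1 →
      ∃ w ∈ d, w.2.1 = x.1 ∧ w.2.2 ≠ x.2.2 := by
  induction d with
  | nil => intro a _ x hx; simp at hx
  | cons z t ih =>
    intro a h x hx hax
    rcases List.mem_cons.mp hx with rfl | hx
    · exact absurd h.head1 (by omega)
    · rcases h.tail with rfl | ht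
      · simp at hx
      · by_cases hz : x.1 = z.2.1
        · -- x is the head of t
          rcases t with _ | ⟨y, t'⟩
          · simp at hx
          · have hxy : x = y := by
              rcases List.mem_cons.mp hx with rfl | hx'
              · rfl
              · rcases ht.tail with rfl | ht'
                · simp at hx'
                · have h1 := diag_left_le ht' x hx'
                  have h2 := ht.strict (List.mem_cons_self)
                  have h3 := ht.head1
                  omega
            have hc := h.chain_head
            exact ⟨z, List.mem_cons_self, hz.symm, hxy ▸ hc.2⟩
        · have h1 : z.2.1 < x.1 := lt_of_le_of_ne (diag_left_le ht x hx) (Ne.symm hz)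
          obtain ⟨w, hw, h2, h3⟩ := ih ht x hx h1
          exact ⟨w, List.mem_cons_of_mem _ hw, h2, h3⟩

lemma diag_succ {b : ℕ} {d : List SArc} :
    ∀ {a : ℕ}, IsDiag a b d → ∀ x ∈ d, x.2.1 < b →
      ∃ w ∈ d, w.1 = x.2.1 ∧ w.2.2 ≠ x.2.2 := by
  induction d with
  | nil => intro a _ x hx; simp at hx
  | cons z t ih =>
    intro a h x hx hxb
    rcases h.tail with rfl | ht
    · simp only [List.mem_singleton] at hx
      subst hx
      exact absurd (h.2.2.1 x (by simp)) (by omega)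
    · rcases List.mem_cons.mp hx with rfl | hx
      · rcases t with _ | ⟨y, t'⟩
        · exact absurd rfl ht.1
        · have hc := h.chain_head
          exact ⟨y, List.mem_cons_of_mem _ (List.mem_cons_self), hc.1.symm,
            fun e => hc.2 e.symm⟩
      · obtain ⟨w, hw, h1, h2⟩ := ih ht x hx hxb
        exact ⟨w, List.mem_cons_of_mem _ hw, h1, h2⟩


lemma mem_Apart_of_cover {c : ℕ} {d : List SArc} (h : IsDiag 0 (c+1) d) {x : SArc} {g : ℕ}
    (hx : x ∈ d) (hσ : x.2.2 = true) (h1 : x.1 < g) (h2 : g ≤ x.2.1) : g ∈ Apart c d := by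
  refine Finset.mem_filter.mpr ⟨Finset.mem_Icc.mpr ⟨by omega, le_trans h2 (diag_right_le h x hx)⟩,
    x, hx, hσ, h1, h2⟩

lemma not_mem_Apart_of_cover {c : ℕ} {d : List SArc} (h : IsDiag 0 (c+1) d) {x : SArc} {g : ℕ}
    (hx : x ∈ d) (hσ : x.2.2 = false) (h1 : x.1 < g) (h2 : g ≤ x.2.1) : g ∉ Apart c d := by
  intro hmem
  obtain ⟨-, y, hy, hyσ, hy1, hy2⟩ := Finset.mem_filter.mp hmem
  have : x = y := diag_cover_unique h x hx y hy h1 h2 hy1 hy2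
  rw [this, hyσ] at hσ
  exact Bool.noConfusion hσ

lemma mem_Apart_elim {c : ℕ} {d : List SArc} {g : ℕ} (hmem : g ∈ Apart c d) :
    ∃ x ∈ d, x.2.2 = true ∧ x.1 < g ∧ g ≤ x.2.1 := (Finset.mem_filter.mp hmem).2

/-- Arcs from diagrams with nested bipartitions do not cross. -/
lemma noncross_of_subset {c : ℕ} {d₁ d₂ : List SArc}
    (h₁ : IsDiag 0 (c+1) d₁) (h₂ : IsDiag 0 (c+1) d₂)
    (hsub : Apart c d₁ ⊆ Apart c d₂) {x y : SArc} (hx : x ∈ d₁) (hy : y ∈ d₂) :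
    ¬ Cross x y := by
  rintro ⟨hσ, hcase⟩
  have hbx := diag_right_le h₂ y hy
  have hbx' := diag_right_le h₁ x hx
  rcases hcase with ⟨l1, l2, l3⟩ | ⟨l1, l2, l3⟩
  · cases hb : x.2.2 with
    | true =>
      -- g := y.1 : in Apart d₁ via x, not in Apart d₂ via pred of y
      have hby : y.2.2 = true := hσ ▸ hb
      have hg1 : y.1 ∈ Apart c d₁ := mem_Apart_of_cover h₁ hx hb l1 l2
      obtain ⟨w, hw, hw1, hw2⟩ := diag_pred h₂ y hy (by omega)
      have hws : w.2.2 = false := by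
        cases hwb : w.2.2
        · rfl
        · exact absurd (hwb.trans hby.symm) hw2
      have hwlt : w.1 < w.2.1 := h₂.strict hw
      exact not_mem_Apart_of_cover h₂ hw hws (by omega) hw1.ge (hsub hg1)
    | false =>
      -- g := x.2.1 + 1 : in Apart d₁ via successor of x, not in Apart d₂ via y
      have hby : y.2.2 = false := hσ ▸ hb
      obtain ⟨w, hw, hw1, hw2⟩ := diag_succ h₁ x hx (by omega)
      have hws : w.2.2 = true := by
        cases hwb : w.2.2
        · rw [hwb, hb] at hw2; exact absurd rfl hw2
        · rfl
      have hwlt : w.1 < w.2.1 := h₁.strict hw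
      have hg1 : x.2.1 + 1 ∈ Apart c d₁ := mem_Apart_of_cover h₁ hw hws (by omega) (by omega)
      exact not_mem_Apart_of_cover h₂ hy hby (by omega) (by omega) (hsub hg1)
  · cases hb : x.2.2 with
    | true =>
      -- g := y.2.1 + 1 : in Apart d₁ via x, not in Apart d₂ via successor of y
      have hby : y.2.2 = true := hσ ▸ hb
      have hg1 : y.2.1 + 1 ∈ Apart c d₁ := mem_Apart_of_cover h₁ hx hb (by omega) (by omega)
      obtain ⟨w, hw, hw1, hw2⟩ := diag_succ h₂ y hy (by omega)
      have hws : w.2.2 = false := by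
        cases hwb : w.2.2
        · rfl
        · exact absurd (hwb.trans hby.symm) hw2
      have hwlt : w.1 < w.2.1 := h₂.strict hw
      exact not_mem_Apart_of_cover h₂ hw hws (by omega) (by omega) (hsub hg1)
    | false =>
      -- g := x.1 : in Apart d₁ via predecessor of x, not in Apart d₂ via y
      have hby : y.2.2 = false := hσ ▸ hb
      obtain ⟨w, hw, hw1, hw2⟩ := diag_pred h₁ x hx (by omega)
      have hws : w.2.2 = true := by
        cases hwb : w.2.2
        · rw [hwb, hb] at hw2; exact absurd rfl hw2
        · rfl
      have hwlt : w.1 < w.2.1 := h₁.strict hw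
      have hg1 : x.1 ∈ Apart c d₁ := mem_Apart_of_cover h₁ hw hws (by omega) hw1.ge
      exact not_mem_Apart_of_cover h₂ hy hby l1 l2 (hsub hg1)

lemma cross_symm {x y : SArc} (h : Cross x y) : Cross y x :=
  ⟨h.1.symm, h.2.elim Or.inr Or.inl⟩


lemma card_filter_zero {α : Type*} {p : α → Prop} [DecidablePred p] {s : Multiset α}
    (h : ∀ x ∈ s, ¬ p x) : Multiset.card (s.filter p) = 0 := by
  simp [Multiset.filter_eq_nil.mpr h]

/-- each diagram has exactly one arc with left endpoint `a` -/
lemma diag_rank {b : ℕ} {d : List SArc} :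
    ∀ {a : ℕ}, IsDiag a b d →
      Multiset.card (Multiset.filter (fun x : SArc => x.1 = a) (↑d : Multiset SArc)) = 1 := by
  intro a h
  rcases d with _ | ⟨z, t⟩
  · exact absurd rfl h.1
  · have hz : z.1 = a := h.head1
    have h0 : Multiset.card (Multiset.filter (fun x : SArc => x.1 = a) (↑t : Multiset SArc)) = 0 := by
      apply card_filter_zero
      intro x hx
      rcases h.tail with rfl | ht
      · simp at hx
      · have h1 := diag_left_le ht x (by exact_mod_cast hx)
        have h2 := h.strict (List.mem_cons_self)
        omega
    rw [← Multiset.cons_coe, Multiset.filter_cons, if_pos hz, Multiset.card_add, h0]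
    rfl

/-- conservation of flow within a single diagram -/
lemma diag_flow {b g : ℕ} {d : List SArc} :
    ∀ {a : ℕ}, IsDiag a b d → a < g → g < b →
      Multiset.card (Multiset.filter (fun x : SArc => x.2.1 = g) (↑d : Multiset SArc)) =
      Multiset.card (Multiset.filter (fun x : SArc => x.1 = g) (↑d : Multiset SArc)) := by
  induction d with
  | nil => intro a _ _ _; rfl
  | cons z t ih =>
    intro a h hg1 hg2
    have hz : z.1 = a := h.head1
    have hzs : z.1 < z.2.1 := h.strict (List.mem_cons_self)
    rcases h.tail with rfl | ht
    · have hzb : z.2.1 = b := h.2.2.1 z (by simp)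
      rw [← Multiset.cons_coe, Multiset.filter_cons, Multiset.filter_cons,
        if_neg (by omega : ¬ z.2.1 = g), if_neg (by omega : ¬ z.1 = g)]
      simp
    · rcases lt_trichotomy g z.2.1 with hlt | heq | hgt
      · -- g below the start of t : everything is 0
        have e1 : Multiset.card (Multiset.filter (fun x : SArc => x.2.1 = g)
            ((z :: t : List SArc) : Multiset SArc)) = 0 := by
          apply card_filter_zero
          intro x hx
          rcases List.mem_cons.mp (by exact_mod_cast hx) with rfl | hx'
          · omega
          · have h1 := diag_left_le ht x hx'
            have h2 := ht.strict hx'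
            omega
        have e2 : Multiset.card (Multiset.filter (fun x : SArc => x.1 = g)
            ((z :: t : List SArc) : Multiset SArc)) = 0 := by
          apply card_filter_zero
          intro x hx
          rcases List.mem_cons.mp (by exact_mod_cast hx) with rfl | hx'
          · omega
          · have h1 := diag_left_le ht x hx'
            omega
        rw [e1, e2]
      · -- g = z.2.1 : one on each side
        have h0 : Multiset.card (Multiset.filter (fun x : SArc => x.2.1 = g)
            (↑t : Multiset SArc)) = 0 := by
          apply card_filter_zero
          intro x hx
          have h1 := diag_left_le ht x hx
          have h2 := ht.strict hx
          omega
        rw [← Multiset.cons_coe, Multiset.filter_cons, Multiset.filter_cons,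
          if_pos heq.symm, if_neg (by omega : ¬ z.1 = g), Multiset.card_add, Multiset.card_add, h0]
        rw [heq] at *
        have := diag_rank ht
        simp only [Multiset.card_singleton, Multiset.card_zero, zero_add]
        omega
      · -- g above : induction
        rw [← Multiset.cons_coe, Multiset.filter_cons, Multiset.filter_cons,
          if_neg (by omega : ¬ z.2.1 = g), if_neg (by omega : ¬ z.1 = g)]
        simpa using ih ht hgt hg2

lemma key {a b : ℕ} {d₁ d₂ : List SArc} {z₁ y₁ : SArc}
    (hd : IsDiag a b (z₁ :: d₁)) (hd' : IsDiag a b (y₁ :: d₂))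
    (hc : ∀ g σ, a < g → g ≤ b →
      ((∃ x ∈ z₁ :: d₁, x.1 < g ∧ g ≤ x.2.1 ∧ x.2.2 = σ) →
       (∃ x ∈ y₁ :: d₂, x.1 < g ∧ g ≤ x.2.1 ∧ x.2.2 = σ)))
    (hs : y₁.2.2 = z₁.2.2) : ¬ z₁.2.1 < y₁.2.1 := by
  intro hlt
  have hz₁ : z₁.1 = a := hd.head1
  have hy₁ : y₁.1 = a := hd'.head1
  have hzs₁ : z₁.1 < z₁.2.1 := hd.strict (List.mem_cons_self)
  have hys₁ : y₁.1 < y₁.2.1 := hd'.strict (List.mem_cons_self)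
  have hy₁b : y₁.2.1 ≤ b := diag_right_le hd' y₁ (List.mem_cons_self)
  obtain ⟨w, hw, hw1, hw2⟩ := diag_succ hd z₁ (List.mem_cons_self) (by omega)
  have hws : w.1 < w.2.1 := hd.strict hw
  obtain ⟨x, hxmem, hx1, hx2, hx3⟩ := hc (z₁.2.1 + 1) w.2.2 (by omega) (by omega)
    ⟨w, hw, by omega, by omega, rfl⟩
  have : x = y₁ := diag_cover_unique hd' x hxmem y₁ (List.mem_cons_self)
    hx1 hx2 (by omega) (by omega)
  rw [this] at hx3
  rw [hs] at hx3
  exact hw2 hx3.symm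

/-- a diagram is determined by the signs with which its arcs cover the gaps. -/
lemma diag_unique {b : ℕ} {d : List SArc} :
    ∀ {a : ℕ} {e : List SArc}, IsDiag a b d → IsDiag a b e →
      (∀ g σ, a < g → g ≤ b →
        ((∃ x ∈ d, x.1 < g ∧ g ≤ x.2.1 ∧ x.2.2 = σ) ↔
         (∃ x ∈ e, x.1 < g ∧ g ≤ x.2.1 ∧ x.2.2 = σ))) →
      d = e := by
  induction d with
  | nil => intro a e h _ _; exact absurd rfl h.1
  | cons z t ih =>
    intro a e h h' hcov
    rcases e with _ | ⟨y, u⟩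
    · exact absurd rfl h'.1
    · have hz1 : z.1 = a := h.head1
      have hy1 : y.1 = a := h'.head1
      have hzs : z.1 < z.2.1 := h.strict (List.mem_cons_self)
      have hys : y.1 < y.2.1 := h'.strict (List.mem_cons_self)
      have hzb : z.2.1 ≤ b := diag_right_le h z (List.mem_cons_self)
      have hyb : y.2.1 ≤ b := diag_right_le h' y (List.mem_cons_self)
      -- the head signs agree
      have hsign : y.2.2 = z.2.2 := by
        obtain ⟨x, hxmem, hx1, hx2, hx3⟩ :=
          (hcov (a+1) z.2.2 (by omega) (by omega)).mp
            ⟨z, List.mem_cons_self, by omega, by omega, rfl⟩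
        have : x = y := diag_cover_unique h' x hxmem y (List.mem_cons_self)
          hx1 hx2 (by omega) (by omega)
        rw [← this, hx3]
      -- the head right endpoints agree
      have hr : z.2.1 = y.2.1 := by
        have k1 := key h h' (fun g σ hg1 hg2 => (hcov g σ hg1 hg2).mp) hsign
        have k2 := key h' h (fun g σ hg1 hg2 => (hcov g σ hg1 hg2).mpr) hsign.symm
        omega
      have hzy : z = y := by
        have : z.2 = y.2 := Prod.ext hr (hsign.symm)
        exact Prod.ext (hz1.trans hy1.symm) this
      subst hzy
      -- now the tails
      rcases h.tail with rfl | ht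
      · have hb : z.2.1 = b := h.2.2.1 z (by simp)
        rcases h'.tail with rfl | hu
        · rfl
        · exfalso
          rcases u with _ | ⟨v, u'⟩
          · exact hu.1 rfl
          · have h1 := hu.head1
            have h2 := hu.strict (List.mem_cons_self)
            have h3 := diag_right_le hu v (List.mem_cons_self)
            omega
      · rcases h'.tail with rfl | hu
        · exfalso
          have hb : z.2.1 = b := h'.2.2.1 z (by simp)
          rcases t with _ | ⟨v, t'⟩
          · exact ht.1 rfl
          · have h1 := ht.head1
            have h2 := ht.strict (List.mem_cons_self)
            have h3 := diag_right_le ht v (List.mem_cons_self)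
            omega
        · congr 1
          apply ih ht hu
          intro g σ hg1 hg2
          constructor
          · intro ⟨x, hxm, p1, p2, p3⟩
            obtain ⟨x', hx'm, q1, q2, q3⟩ := (hcov g σ (by omega) hg2).mp
              ⟨x, List.mem_cons_of_mem _ hxm, p1, p2, p3⟩
            rcases List.mem_cons.mp hx'm with rfl | hm
            · omega
            · exact ⟨x', hm, q1, q2, q3⟩
          · intro ⟨x, hxm, p1, p2, p3⟩
            obtain ⟨x', hx'm, q1, q2, q3⟩ := (hcov g σ (by omega) hg2).mpr
              ⟨x, List.mem_cons_of_mem _ hxm, p1, p2, p3⟩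
            rcases List.mem_cons.mp hx'm with rfl | hm
            · omega
            · exact ⟨x', hm, q1, q2, q3⟩


/-- Build (in decreasing order) the arc diagram determined by a sign function on gaps `1..n`. -/
def rbuild (s : ℕ → Bool) : ℕ → List SArc
  | 0 => []
  | n+1 =>
    match rbuild s n with
    | [] => [(0, n+1, s (n+1))]
    | x :: t => if s (n+1) = x.2.2 then (x.1, n+1, x.2.2) :: t else (n, n+1, s (n+1)) :: x :: t

/-- Master invariant of `rbuild`. -/
lemma rbuild_master (s : ℕ → Bool) : ∀ n, 1 ≤ n →
    (∃ hd t, rbuild s n = hd :: t ∧ hd.2.1 = n ∧ hd.2.2 = s n) ∧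
    (∀ x ∈ rbuild s n, x.1 < x.2.1 ∧ x.2.1 ≤ n ∧
      (∀ g, x.1 < g → g ≤ x.2.1 → s g = x.2.2) ∧
      (x.1 = 0 ∨ s x.1 ≠ x.2.2) ∧ (x.2.1 = n ∨ s (x.2.1+1) ≠ x.2.2)) ∧
    (∀ hd t, rbuild s n = hd :: t → ∀ x ∈ t, x.2.1 ≤ hd.1) ∧
    List.Chain' (fun x y => y.2.1 = x.1 ∧ y.2.2 ≠ x.2.2) (rbuild s n) ∧
    (∀ y ∈ (rbuild s n).getLast?, y.1 = 0) ∧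
    (∀ g, 1 ≤ g → g ≤ n → ∃ x ∈ rbuild s n, x.1 < g ∧ g ≤ x.2.1) ∧
    List.Pairwise (fun x y => y.2.1 < x.2.1) (rbuild s n) := by
  intro n
  induction n with
  | zero => omega
  | succ n ih =>
    intro _
    rcases Nat.eq_zero_or_pos n with rfl | hn
    · have e : rbuild s 1 = [(0, 1, s 1)] := by rw [rbuild]; rfl
      refine ⟨⟨(0,1,s 1), [], e, rfl, rfl⟩, ?_, ?_, ?_, ?_, ?_, ?_⟩
      · intro x hx
        rw [e] at hx
        simp only [List.mem_singleton] at hx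
        subst hx
        refine ⟨Nat.zero_lt_one, le_refl _, ?_, Or.inl rfl, Or.inl rfl⟩
        intro g h1 h2
        have h1' : 0 < g := h1
        have h2' : g ≤ 1 := h2
        have : g = 1 := by omega
        rw [this]
      · intro hd t h x hx
        rw [e] at h
        cases h
        simp at hx
      · rw [e]; exact List.isChain_singleton _
      · rw [e]
        intro y hy
        simp only [List.getLast?_singleton, Option.mem_def, Option.some.injEq] at hy
        subst hy
        rfl
      · intro g h1 h2
        have : g = 1 := by omega
        subst this
        rw [e]
        exact ⟨(0,1,s 1), List.mem_singleton.mpr rfl, by simp, by simp⟩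
      · rw [e]; simp
    · obtain ⟨⟨hd, t, heq, hhd1, hhd2⟩, hmem, htb, hchain, hlast, hcov, hpw⟩ := ih hn
      have hhdm := hmem hd (heq ▸ List.mem_cons_self)
      have hhds : hd.1 < hd.2.1 := hhdm.1
      by_cases hs : s (n+1) = hd.2.2
      · -- extend the head arc
        have e : rbuild s (n+1) = (hd.1, n+1, hd.2.2) :: t := by
          rw [rbuild, heq]; exact if_pos hs
        have htlt : ∀ x ∈ t, x.2.1 ≤ hd.1 := htb hd t heq
        refine ⟨⟨(hd.1, n+1, hd.2.2), t, e, rfl, hs.symm⟩, ?_, ?_, ?_, ?_, ?_, ?_⟩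
        · intro x hx
          rw [e] at hx
          rcases List.mem_cons.mp hx with rfl | hx'
          · refine ⟨by simp; omega, le_refl _, ?_, ?_, Or.inl rfl⟩
            · intro g h1 h2
              simp only at h1 h2 ⊢
              rcases Nat.lt_succ_iff_lt_or_eq.mp (Nat.lt_succ_of_le h2) with h | rfl
              · exact hhdm.2.2.1 g h1 (by omega)
              · exact hs
            · simpa using hhdm.2.2.2.1
          · obtain ⟨p1, p2, p3, p4, p5⟩ := hmem x (heq ▸ List.mem_cons_of_mem _ hx')
            have hxl : x.2.1 ≤ hd.1 := htlt x hx'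
            refine ⟨p1, by omega, p3, p4, Or.inr ?_⟩
            rcases p5 with h | h
            · omega
            · exact h
        · intro hd' t' h' x hx
          rw [e] at h'
          cases h'
          exact htlt x hx
        · rw [e]
          rcases t with _ | ⟨y, t'⟩
          · exact List.isChain_singleton _
          · rw [heq] at hchain
            simp only [List.Chain', List.isChain_cons_cons] at hchain ⊢
            exact ⟨hchain.1, hchain.2⟩
        · intro z hz
          rw [e] at hz
          rcases t with _ | ⟨y, t'⟩
          · simp only [List.getLast?_singleton, Option.mem_def, Option.some.injEq] at hz
            subst hz
            have h0 : hd.1 = 0 := hlast hd (by rw [heq]; simp)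
            simpa using h0
          · rw [List.getLast?_cons_cons] at hz
            apply hlast
            rw [heq, List.getLast?_cons_cons]
            exact hz
        · intro g h1 h2
          rcases Nat.lt_succ_iff_lt_or_eq.mp (Nat.lt_succ_of_le h2) with h | rfl
          · obtain ⟨x, hxm, q1, q2⟩ := hcov g h1 (by omega)
            rw [heq] at hxm
            rcases List.mem_cons.mp hxm with h' | hx'
            · refine ⟨(hd.1, n+1, hd.2.2), e ▸ List.mem_cons_self, ?_, by simp; omega⟩
              rw [h'] at q1
              exact q1
            · exact ⟨x, e ▸ List.mem_cons_of_mem _ hx', q1, q2⟩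
          · exact ⟨(hd.1, n+1, hd.2.2), e ▸ List.mem_cons_self, by simp; omega, by simp⟩
        · rw [e]
          rw [heq] at hpw
          rw [List.pairwise_cons] at hpw ⊢
          refine ⟨fun y hy => ?_, hpw.2⟩
          have := htlt y hy
          simp only
          omega
      · -- start a new arc
        have e : rbuild s (n+1) = (n, n+1, s (n+1)) :: hd :: t := by
          rw [rbuild, heq]; exact if_neg hs
        have htlt : ∀ x ∈ t, x.2.1 ≤ hd.1 := htb hd t heq
        refine ⟨⟨(n, n+1, s (n+1)), hd :: t, e, rfl, rfl⟩, ?_, ?_, ?_, ?_, ?_, ?_⟩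
        · intro x hx
          rw [e] at hx
          rcases List.mem_cons.mp hx with rfl | hx'
          · refine ⟨by simp, le_refl _, ?_, Or.inr ?_, Or.inl rfl⟩
            · intro g h1 h2
              simp only at h1 h2 ⊢
              have : g = n + 1 := by omega
              rw [this]
            · simp only
              rw [hhd2] at hs
              exact fun h => hs h.symm
          · obtain ⟨p1, p2, p3, p4, p5⟩ := hmem x (heq ▸ hx')
            refine ⟨p1, by omega, p3, p4, ?_⟩
            rcases List.mem_cons.mp hx' with rfl | hx''
            · exact Or.inr (by rw [hhd1]; exact fun h => hs h)
            · have hxl : x.2.1 ≤ hd.1 := htlt x hx''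
              refine Or.inr ?_
              rcases p5 with h | h
              · omega
              · exact h
        · intro hd' t' h' x hx
          rw [e] at h'
          cases h'
          exact le_trans ((hmem x (heq ▸ hx)).2.1) (le_refl n)
        · rw [e]; simp only [List.Chain', List.isChain_cons_cons]
          constructor
          · exact ⟨hhd1, fun h => hs h.symm⟩
          · rw [← heq]; exact hchain
        · intro z hz
          rw [e, List.getLast?_cons_cons, ← heq] at hz
          exact hlast z hz
        · intro g h1 h2
          rcases Nat.lt_succ_iff_lt_or_eq.mp (Nat.lt_succ_of_le h2) with h | rfl
          · obtain ⟨x, hxm, q1, q2⟩ := hcov g h1 (by omega)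
            exact ⟨x, e ▸ List.mem_cons_of_mem _ (heq ▸ hxm), q1, q2⟩
          · exact ⟨(n, n+1, s (n+1)), e ▸ List.mem_cons_self, by simp, by simp⟩
        · rw [e, List.pairwise_cons]
          constructor
          · intro y hy
            have := (hmem y (heq ▸ hy)).2.1
            simp only
            omega
          · rw [← heq]; exact hpw


/-- The arc diagram determined by a sign function on gaps `1..c+1`. -/
def buildDiag (s : ℕ → Bool) (c : ℕ) : List SArc := (rbuild s (c+1)).reverse

lemma buildDiag_isDiag (s : ℕ → Bool) (c : ℕ) : IsDiag 0 (c+1) (buildDiag s c) := by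
  obtain ⟨⟨hd, t, heq, hhd1, hhd2⟩, hmem, htb, hchain, hlast, hcov, hpw⟩ :=
    rbuild_master s (c+1) (by omega)
  refine ⟨?_, ?_, ?_, ?_, ?_⟩
  · simp [buildDiag, heq]
  · intro x hx
    rw [buildDiag, List.head?_reverse] at hx
    exact hlast x hx
  · intro x hx
    rw [buildDiag, List.getLast?_reverse, heq] at hx
    simp only [List.head?_cons, Option.mem_def, Option.some.injEq] at hx
    rw [← hx]
    exact hhd1
  · rw [buildDiag]; simp only [List.Chain', List.isChain_reverse]
    exact hchain
  · intro x hx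
    exact (hmem x (List.mem_reverse.mp hx)).1

lemma buildDiag_mem {s : ℕ → Bool} {c : ℕ} : ∀ x ∈ buildDiag s c,
    x.1 < x.2.1 ∧ x.2.1 ≤ c+1 ∧
    (∀ g, x.1 < g → g ≤ x.2.1 → s g = x.2.2) ∧
    (x.1 = 0 ∨ s x.1 ≠ x.2.2) ∧ (x.2.1 = c+1 ∨ s (x.2.1+1) ≠ x.2.2) := by
  intro x hx
  obtain ⟨-, hmem, -⟩ := rbuild_master s (c+1) (by omega)
  exact hmem x (List.mem_reverse.mp hx)

lemma buildDiag_cover {s : ℕ → Bool} {c : ℕ} {g : ℕ} (h1 : 1 ≤ g) (h2 : g ≤ c+1) :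
    ∃ x ∈ buildDiag s c, x.1 < g ∧ g ≤ x.2.1 ∧ x.2.2 = s g := by
  obtain ⟨-, hmem, -, -, -, hcov, -⟩ := rbuild_master s (c+1) (by omega)
  obtain ⟨x, hxm, q1, q2⟩ := hcov g h1 h2
  exact ⟨x, List.mem_reverse.mpr hxm, q1, q2, ((hmem x hxm).2.2.1 g q1 q2).symm⟩

lemma buildDiag_nodup {s : ℕ → Bool} {c : ℕ} : (buildDiag s c).Nodup := by
  rw [buildDiag, List.nodup_reverse]
  obtain ⟨-, -, -, -, -, -, hpw⟩ := rbuild_master s (c+1) (by omega)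
  exact hpw.imp fun {a b} h e => absurd h (by rw [e]; exact lt_irrefl _)

lemma buildDiag_Apart {s : ℕ → Bool} {c : ℕ} :
    Apart c (buildDiag s c) = (Finset.Icc 1 (c+1)).filter (fun g => s g = true) := by
  ext g
  simp only [Apart, Finset.mem_filter]
  constructor
  · rintro ⟨hicc, x, hx, hσ, h1, h2⟩
    refine ⟨hicc, ?_⟩
    rw [← hσ]
    exact (buildDiag_mem x hx).2.2.1 g h1 h2
  · rintro ⟨hicc, hσ⟩
    have hicc' := Finset.mem_Icc.mp hicc
    obtain ⟨x, hxm, q1, q2, q3⟩ := buildDiag_cover hicc'.1 hicc'.2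
    exact ⟨hicc, x, hxm, q3.trans hσ, q1, q2⟩


lemma card_filter_split {α : Type*} (A : Multiset α) (P Q : α → Prop)
    [DecidablePred P] [DecidablePred Q] :
    Multiset.card (A.filter P) =
      Multiset.card (A.filter (fun x => P x ∧ Q x)) +
      Multiset.card (A.filter (fun x => P x ∧ ¬ Q x)) := by
  rw [← Multiset.card_add]
  congr 1
  conv_lhs => rw [← Multiset.filter_add_not Q (A.filter P)]
  rw [Multiset.filter_filter, Multiset.filter_filter]
  congr 1
  · exact Multiset.filter_congr (fun x _ => and_comm)
  · exact Multiset.filter_congr (fun x _ => and_comm)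

lemma exists_P_not_Q' {α : Type*} {s : Multiset α} {P Q : α → Prop}
    [DecidablePred P] [DecidablePred Q]
    (h : Multiset.card (s.filter Q) < Multiset.card (s.filter P)) :
    ∃ w ∈ s, P w ∧ ¬ Q w := by
  by_contra hc
  push_neg at hc
  have e : s.filter P = Multiset.filter P (s.filter Q) := by
    rw [Multiset.filter_filter]
    exact Multiset.filter_congr (fun x hx => ⟨fun hp => ⟨hp, hc x hx hp⟩, fun h' => h'.1⟩)
  rw [e] at h
  exact absurd (Multiset.card_le_card (Multiset.filter_le _ _)) (not_le.mpr h)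

lemma exists_P_not_Q {α : Type*} {s : Multiset α} {P Q : α → Prop}
    [DecidablePred P] [DecidablePred Q]
    (h : Multiset.card (s.filter Q) ≤ Multiset.card (s.filter P))
    {z : α} (hz : z ∈ s) (hzQ : Q z) (hzP : ¬ P z) :
    ∃ w ∈ s, P w ∧ ¬ Q w := by
  by_contra hc
  push_neg at hc
  have e1 := card_filter_split s Q P
  have e2 := card_filter_split s P Q
  have h1 : 0 < Multiset.card (s.filter (fun x => Q x ∧ ¬ P x)) :=
    Multiset.card_pos_iff_exists_mem.mpr ⟨z, Multiset.mem_filter.mpr ⟨hz, hzQ, hzP⟩⟩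
  have h2 : Multiset.card (s.filter (fun x => P x ∧ ¬ Q x)) = 0 :=
    card_filter_zero (fun x hx hpq => hpq.2 (hc x hx hpq.1))
  have h3 : Multiset.card (s.filter (fun x => P x ∧ Q x)) =
      Multiset.card (s.filter (fun x => Q x ∧ P x)) := by
    congr 1
    exact Multiset.filter_congr (fun x _ => and_comm)
  omega

lemma exists_max_right {S : Multiset SArc} (hS : S ≠ 0) :
    ∃ m ∈ S, ∀ y ∈ S, y.2.1 ≤ m.2.1 := by
  induction S using Multiset.induction with
  | empty => exact absurd rfl hS
  | cons a S ih =>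
    rcases Multiset.empty_or_exists_mem S with rfl | ⟨b, hb⟩
    · exact ⟨a, Multiset.mem_cons_self _ _, fun y hy => by
        rw [Multiset.mem_cons] at hy
        rcases hy with rfl | hy
        · exact le_refl _
        · simp at hy⟩
    · obtain ⟨m, hm, hmax⟩ := ih (fun h => by rw [h] at hb; simp at hb)
      by_cases hc : a.2.1 ≤ m.2.1
      · refine ⟨m, Multiset.mem_cons_of_mem hm, fun y hy => ?_⟩
        rcases Multiset.mem_cons.mp hy with rfl | hy
        · exact hc
        · exact hmax y hy
      · refine ⟨a, Multiset.mem_cons_self _ _, fun y hy => ?_⟩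
        rcases Multiset.mem_cons.mp hy with rfl | hy
        · exact le_refl _
        · exact le_trans (hmax y hy) (le_of_not_ge hc)

/-- number of arcs of a given sign covering gap `g` -/
def cntS (A : Multiset SArc) (σ : Bool) (g : ℕ) : ℕ :=
  Multiset.card (A.filter (fun x => x.2.2 = σ ∧ x.1 < g ∧ g ≤ x.2.1))

/-- total number of arcs covering gap `g` -/
def covA (A : Multiset SArc) (g : ℕ) : ℕ :=
  Multiset.card (A.filter (fun x => x.1 < g ∧ g ≤ x.2.1))

lemma covA_split (A : Multiset SArc) (g : ℕ) :
    covA A g = cntS A true g + cntS A false g := by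
  rw [covA, card_filter_split A _ (fun x => x.2.2 = true), cntS, cntS]
  congr 1
  · congr 1
    exact Multiset.filter_congr (fun x _ => by tauto)
  · congr 1
    refine Multiset.filter_congr (fun x _ => ?_)
    constructor
    · rintro ⟨h1, h2⟩
      exact ⟨by simpa using h2, h1⟩
    · rintro ⟨h1, h2⟩
      exact ⟨h2, by simp [h1]⟩

lemma covA_one {c : ℕ} {A : Multiset SArc} (hcons : Consistent c A) :
    covA A 1 = arcRank A := by
  rw [covA, arcRank]
  congr 1
  refine Multiset.filter_congr (fun x hx => ?_)
  have hv := (hcons.1 x hx).1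
  omega

lemma covA_step {c : ℕ} {A : Multiset SArc} (hcons : Consistent c A) {g : ℕ}
    (h1 : 1 ≤ g) (h2 : g ≤ c) : covA A (g+1) = covA A g := by
  have hval : ∀ x ∈ A, x.1 < x.2.1 := fun x hx => (hcons.1 x hx).1
  have eS : Multiset.card (A.filter (fun x => (x.1 < g+1 ∧ g+1 ≤ x.2.1) ∧ x.1 = g)) =
      Multiset.card (A.filter (fun x => x.1 = g)) := by
    congr 1
    refine Multiset.filter_congr (fun x hx => ?_)
    have := hval x hx
    constructor
    · rintro ⟨-, h⟩; exact h
    · intro h; exact ⟨⟨by omega, by omega⟩, h⟩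
  have eX : Multiset.card (A.filter (fun x => (x.1 < g+1 ∧ g+1 ≤ x.2.1) ∧ ¬ x.1 = g)) =
      Multiset.card (A.filter (fun x => (x.1 < g ∧ g ≤ x.2.1) ∧ ¬ x.2.1 = g)) := by
    congr 1
    refine Multiset.filter_congr (fun x hx => ?_)
    have := hval x hx
    constructor
    · rintro ⟨⟨p1, p2⟩, p3⟩; exact ⟨⟨by omega, by omega⟩, by omega⟩
    · rintro ⟨⟨p1, p2⟩, p3⟩; exact ⟨⟨by omega, by omega⟩, by omega⟩
  have eE : Multiset.card (A.filter (fun x => (x.1 < g ∧ g ≤ x.2.1) ∧ x.2.1 = g)) =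
      Multiset.card (A.filter (fun x => x.2.1 = g)) := by
    congr 1
    refine Multiset.filter_congr (fun x hx => ?_)
    have := hval x hx
    constructor
    · rintro ⟨-, h⟩; exact h
    · intro h; exact ⟨⟨by omega, by omega⟩, h⟩
  have s1 := card_filter_split A (fun x => x.1 < g+1 ∧ g+1 ≤ x.2.1) (fun x => x.1 = g)
  have s2 := card_filter_split A (fun x => x.1 < g ∧ g ≤ x.2.1) (fun x => x.2.1 = g)
  have hflow := hcons.2.2 g h1 h2
  rw [covA, covA]
  omega

lemma covA_const {c : ℕ} {A : Multiset SArc} (hcons : Consistent c A) :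
    ∀ g, 1 ≤ g → g ≤ c+1 → covA A g = arcRank A := by
  intro g
  induction g with
  | zero => omega
  | succ g ih =>
    intro _ hg
    rcases Nat.eq_zero_or_pos g with rfl | hg1
    · exact covA_one hcons
    · rw [covA_step hcons hg1 (by omega)]
      exact ih hg1 (by omega)


/-- If the gaps `(i,j]` are all covered by some `+` arc and the boundary gaps are not,
then `(i,j,+)` is itself an arc of a consistent multiset. -/
lemma plus_arc_mem {c : ℕ} {A : Multiset SArc} (hcons : Consistent c A) {i j : ℕ}
    (hij : i < j) (hj : j ≤ c+1)
    (hrun : ∀ g, i < g → g ≤ j → 0 < cntS A true g)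
    (hlo : i = 0 ∨ cntS A true i = 0) (hhi : j = c+1 ∨ cntS A true (j+1) = 0) :
    (i, j, true) ∈ A := by
  have hval := hcons.1
  have hnc := hcons.2.1
  set S := A.filter (fun x => x.2.2 = true ∧ x.1 < i+1 ∧ i+1 ≤ x.2.1) with hSdef
  have hS : S ≠ 0 := by
    intro h0
    have := hrun (i+1) (by omega) (by omega)
    rw [cntS, ← hSdef, h0] at this
    simp at this
  obtain ⟨m, hmS, hmax⟩ := exists_max_right hS
  obtain ⟨hmA, hmσ, hm1, hm2⟩ := Multiset.mem_filter.mp hmS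
  have hcontra_lo : ∀ x ∈ A, x.2.2 = true → ¬ (x.1 < i ∧ i ≤ x.2.1) := by
    intro x hx hxσ ⟨p1, p2⟩
    rcases hlo with rfl | h0
    · omega
    · have : x ∈ A.filter (fun x => x.2.2 = true ∧ x.1 < i ∧ i ≤ x.2.1) :=
        Multiset.mem_filter.mpr ⟨hx, hxσ, p1, p2⟩
      have hpos : 0 < cntS A true i := Multiset.card_pos_iff_exists_mem.mpr ⟨x, this⟩
      omega
  -- m starts exactly at i
  have hma : m.1 = i := by
    by_contra hne
    have hlt : m.1 < i := by omega
    exact hcontra_lo m hmA hmσ ⟨hlt, by omega⟩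
  -- m ends at most at j
  have hmb : m.2.1 ≤ j := by
    by_contra hgt
    push_neg at hgt
    have hmv := (hval m hmA).2
    rcases hhi with rfl | h0
    · omega
    · have : m ∈ A.filter (fun x => x.2.2 = true ∧ x.1 < j+1 ∧ j+1 ≤ x.2.1) :=
        Multiset.mem_filter.mpr ⟨hmA, hmσ, by omega, by omega⟩
      have hpos : 0 < cntS A true (j+1) := Multiset.card_pos_iff_exists_mem.mpr ⟨m, this⟩
      omega
  -- m ends exactly at j
  have hmb' : m.2.1 = j := by
    by_contra hne
    have hlt : m.2.1 < j := by omega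
    have := hrun (m.2.1 + 1) (by omega) (by omega)
    obtain ⟨x, hxf⟩ := Multiset.card_pos_iff_exists_mem.mp this
    obtain ⟨hxA, hxσ, hx1, hx2⟩ := Multiset.mem_filter.mp hxf
    rcases lt_trichotomy x.1 i with hc1 | hc2 | hc3
    · exact hcontra_lo x hxA hxσ ⟨hc1, by omega⟩
    · -- x also covers gap i+1, contradicting maximality of m
      have hxS : x ∈ S := Multiset.mem_filter.mpr ⟨hxA, hxσ, by omega, by omega⟩
      have := hmax x hxS
      omega
    · -- m and x cross
      exact hnc m hmA x hxA ⟨hmσ.trans hxσ.symm, Or.inl ⟨by omega, by omega, by omega⟩⟩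
  have : m = (i, j, true) := by
    have h2 : m.2 = (j, true) := Prod.ext hmb' hmσ
    exact Prod.ext hma h2
  rw [← this]
  exact hmA

/-- If the gaps `(i,j]` are covered by no `+` arc (hence only by `−` arcs) while the
boundary gaps are covered by some `+` arc, then `(i,j,−)` is an arc of a consistent
multiset of positive rank. -/
lemma minus_arc_mem {c k : ℕ} {A : Multiset SArc} (hcons : Consistent c A)
    (hrank : arcRank A = k) (hk : 0 < k) {i j : ℕ}
    (hij : i < j) (hj : j ≤ c+1)
    (hrun : ∀ g, i < g → g ≤ j → cntS A true g = 0)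
    (hlo : i = 0 ∨ 0 < cntS A true i) (hhi : j = c+1 ∨ 0 < cntS A true (j+1)) :
    (i, j, false) ∈ A := by
  have hval := hcons.1
  have hnc := hcons.2.1
  have hcov : ∀ g, 1 ≤ g → g ≤ c+1 → covA A g = k := by
    intro g p1 p2
    rw [covA_const hcons g p1 p2, hrank]
  have hN : ∀ g, i < g → g ≤ j → cntS A false g = k := by
    intro g p1 p2
    have := covA_split A g
    have := hcov g (by omega) (by omega)
    have := hrun g p1 p2
    omega
  -- no minus arc starts strictly inside (i,j)
  have hstart : ∀ x ∈ A, x.2.2 = false → ¬ (i < x.1 ∧ x.1 < j) := by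
    rintro x hxA hxσ ⟨p1, p2⟩
    have hxv := (hval x hxA).1
    have e1 : cntS A false x.1 = k := hN x.1 p1 (by omega)
    have e2 : cntS A false (x.1+1) = k := hN (x.1+1) (by omega) (by omega)
    -- x covers gap x.1+1 but not gap x.1 : so some minus arc covers x.1 but not x.1+1
    obtain ⟨w, hwA, hwP, hwQ⟩ := exists_P_not_Q
      (P := fun y => y.2.2 = false ∧ y.1 < x.1 ∧ x.1 ≤ y.2.1)
      (Q := fun y => y.2.2 = false ∧ y.1 < x.1+1 ∧ x.1+1 ≤ y.2.1)
      (by rw [cntS] at e1 e2; omega) hxA ⟨hxσ, by omega, by omega⟩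
      (by rintro ⟨-, q, -⟩; omega)
    obtain ⟨hwσ, hw1, hw2⟩ := hwP
    have hw3 : w.2.1 = x.1 := by
      by_contra hne
      exact hwQ ⟨hwσ, by omega, by omega⟩
    -- w crosses x
    exact hnc w hwA x hxA ⟨hwσ.trans hxσ.symm, Or.inl ⟨by omega, by omega, by omega⟩⟩
  -- no minus arc ends strictly inside (i,j)
  have hend : ∀ x ∈ A, x.2.2 = false → ¬ (i < x.2.1 ∧ x.2.1 < j) := by
    rintro x hxA hxσ ⟨p1, p2⟩
    have hxv := (hval x hxA).1
    have e1 : cntS A false x.2.1 = k := hN x.2.1 p1 (by omega)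
    have e2 : cntS A false (x.2.1+1) = k := hN (x.2.1+1) (by omega) (by omega)
    obtain ⟨w, hwA, hwP, hwQ⟩ := exists_P_not_Q
      (P := fun y => y.2.2 = false ∧ y.1 < x.2.1+1 ∧ x.2.1+1 ≤ y.2.1)
      (Q := fun y => y.2.2 = false ∧ y.1 < x.2.1 ∧ x.2.1 ≤ y.2.1)
      (by rw [cntS] at e1 e2; omega) hxA ⟨hxσ, by omega, by omega⟩
      (by rintro ⟨-, -, q⟩; omega)
    obtain ⟨hwσ, hw1, hw2⟩ := hwP
    have hw4 : w.1 = x.2.1 := by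
      by_contra hne
      exact hwQ ⟨hwσ, by omega, by omega⟩
    -- x crosses w
    exact hnc x hxA w hwA ⟨hxσ.trans hwσ.symm, Or.inl ⟨by omega, by omega, by omega⟩⟩
  -- a minus arc starting at i
  have hb : ∃ x ∈ A, x.2.2 = false ∧ x.1 = i := by
    rcases Nat.eq_zero_or_pos i with rfl | hi
    · have := hN 1 (by omega) (by omega)
      have hp : 0 < cntS A false 1 := by omega
      obtain ⟨x, hxf⟩ := Multiset.card_pos_iff_exists_mem.mp hp
      obtain ⟨hxA, hxσ, hx1, hx2⟩ := Multiset.mem_filter.mp hxf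
      exact ⟨x, hxA, hxσ, by omega⟩
    · have hpos : 0 < cntS A true i := by
        rcases hlo with h0 | hpos
        · omega
        · exact hpos
      have e1 : cntS A false (i+1) = k := hN (i+1) (by omega) (by omega)
      have e2 : cntS A false i < k := by
        have h1 := covA_split A i
        have h2 := hcov i (by omega) (by omega)
        omega
      obtain ⟨x, hxA, hxP, hxQ⟩ := exists_P_not_Q' (s := A)
        (P := fun y : SArc => y.2.2 = false ∧ y.1 < i+1 ∧ i+1 ≤ y.2.1)
        (Q := fun y : SArc => y.2.2 = false ∧ y.1 < i ∧ i ≤ y.2.1)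
        (by rw [cntS] at e1; rw [cntS] at e2; omega)
      obtain ⟨hxσ, hx1, hx2⟩ := hxP
      have : x.1 = i := by
        by_contra hne
        exact hxQ ⟨hxσ, by omega, by omega⟩
      exact ⟨x, hxA, hxσ, this⟩
  -- a minus arc ending at j
  have hc' : ∃ y ∈ A, y.2.2 = false ∧ y.2.1 = j := by
    rcases hhi with rfl | hpos
    · have := hN (c+1) (by omega) (by omega)
      have hp : 0 < cntS A false (c+1) := by omega
      obtain ⟨y, hyf⟩ := Multiset.card_pos_iff_exists_mem.mp hp
      obtain ⟨hyA, hyσ, hy1, hy2⟩ := Multiset.mem_filter.mp hyf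
      have := (hval y hyA).2
      exact ⟨y, hyA, hyσ, by omega⟩
    · have hjlt : j < c + 1 := by
        by_contra hcc
        have hje : j = c + 1 := by omega
        subst hje
        have hz : cntS A true (c+1+1) = 0 := by
          apply card_filter_zero
          rintro x hx ⟨-, -, q⟩
          have := (hval x hx).2
          omega
        omega
      have e1 : cntS A false j = k := hN j (by omega) (by omega)
      have e2 : cntS A false (j+1) < k := by
        have h1 := covA_split A (j+1)
        have h3 := hcov (j+1) (by omega) (by omega)
        omega
      obtain ⟨y, hyA, hyP, hyQ⟩ := exists_P_not_Q' (s := A)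
        (P := fun z : SArc => z.2.2 = false ∧ z.1 < j ∧ j ≤ z.2.1)
        (Q := fun z : SArc => z.2.2 = false ∧ z.1 < j+1 ∧ j+1 ≤ z.2.1)
        (by rw [cntS] at e1; rw [cntS] at e2; omega)
      obtain ⟨hyσ, hy1, hy2⟩ := hyP
      have : y.2.1 = j := by
        by_contra hne
        exact hyQ ⟨hyσ, by omega, by omega⟩
      exact ⟨y, hyA, hyσ, this⟩
  obtain ⟨x, hxA, hxσ, hx1⟩ := hb
  obtain ⟨y, hyA, hyσ, hy1⟩ := hc'
  have hxv := (hval x hxA).1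
  have hyv := (hval y hyA).1
  -- x ends at j or beyond
  have hxge : x.2.1 = j ∨ j < x.2.1 := by
    have := hend x hxA hxσ
    omega
  rcases hxge with hxj | hxgt
  · have : x = (i, j, false) := Prod.ext hx1 (Prod.ext hxj hxσ)
    rw [← this]; exact hxA
  · have hyle : y.1 = i ∨ y.1 < i := by
      have := hstart y hyA hyσ
      omega
    rcases hyle with hyi | hylt
    · have : y = (i, j, false) := Prod.ext hyi (Prod.ext hy1 hyσ)
      rw [← this]; exact hyA
    · exact absurd ⟨hxσ.trans hyσ.symm, Or.inr ⟨by omega, by omega, by omega⟩⟩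
        (hnc x hxA y hyA)


lemma card_filter_arcsOf (p : SArc → Prop) [DecidablePred p] (D : Multiset (List SArc)) :
    Multiset.card ((arcsOf D).filter p) =
      (D.map (fun l : List SArc => Multiset.card (Multiset.filter p (↑l : Multiset SArc)))).sum := by
  induction D using Multiset.induction with
  | empty => simp [arcsOf]
  | cons d D ih =>
    rw [arcsOf, Multiset.cons_bind, Multiset.filter_add, Multiset.card_add, Multiset.map_cons,
      Multiset.sum_cons, ← arcsOf, ih]

lemma mem_arcsOf {D : Multiset (List SArc)} {x : SArc} :
    x ∈ arcsOf D ↔ ∃ d ∈ D, x ∈ d := by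
  simp [arcsOf, Multiset.mem_bind]

/-- forward direction : a stacked multiset of diagrams has consistent arcs of rank `card`. -/
lemma mapsTo_aux {c k : ℕ} {D : Multiset (List SArc)} (hcard : Multiset.card D = k)
    (hdiag : ∀ d ∈ D, IsArcDiagram c d) (hstack : Stacked c D) :
    Consistent c (arcsOf D) ∧ arcRank (arcsOf D) = k := by
  have hdiag' : ∀ d ∈ D, IsDiag 0 (c+1) d := fun d hd => isArcDiagram_iff.mp (hdiag d hd)
  refine ⟨⟨?_, ?_, ?_⟩, ?_⟩
  · intro x hx
    obtain ⟨d, hd, hxd⟩ := mem_arcsOf.mp hx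
    exact ⟨(hdiag' d hd).strict hxd, diag_right_le (hdiag' d hd) x hxd⟩
  · intro x hx y hy
    obtain ⟨d₁, hd₁, hxd⟩ := mem_arcsOf.mp hx
    obtain ⟨d₂, hd₂, hyd⟩ := mem_arcsOf.mp hy
    rcases hstack d₁ hd₁ d₂ hd₂ with hsub | hsub
    · exact noncross_of_subset (hdiag' d₁ hd₁) (hdiag' d₂ hd₂) hsub hxd hyd
    · intro hcr
      exact noncross_of_subset (hdiag' d₂ hd₂) (hdiag' d₁ hd₁) hsub hyd hxd (cross_symm hcr)
  · intro g hg1 hg2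
    rw [card_filter_arcsOf, card_filter_arcsOf]
    congr 1
    apply Multiset.map_congr rfl
    intro d hd
    exact diag_flow (hdiag' d hd) (by omega) (by omega)
  · rw [arcRank, card_filter_arcsOf]
    have : Multiset.map (fun l : List SArc =>
        Multiset.card (Multiset.filter (fun x : SArc => x.1 = 0) (↑l : Multiset SArc))) D =
        Multiset.map (fun _ => 1) D := by
      apply Multiset.map_congr rfl
      intro l hl
      exact diag_rank (hdiag' l hl)
    rw [this]
    simp [hcard]

lemma stacked_max {c : ℕ} {D : Multiset (List SArc)} (hD : D ≠ 0) (hst : Stacked c D) :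
    ∃ m ∈ D, ∀ d ∈ D, Apart c d ⊆ Apart c m := by
  induction D using Multiset.induction with
  | empty => exact absurd rfl hD
  | cons a S ih =>
    rcases Multiset.empty_or_exists_mem S with rfl | ⟨b, hb⟩
    · refine ⟨a, Multiset.mem_cons_self _ _, fun d hd => ?_⟩
      rcases Multiset.mem_cons.mp hd with rfl | hd
      · exact Finset.Subset.refl _
      · simp at hd
    · have hst' : Stacked c S := fun x hx y hy =>
        hst x (Multiset.mem_cons_of_mem hx) y (Multiset.mem_cons_of_mem hy)
      obtain ⟨m, hm, hmax⟩ := ih (fun h => by rw [h] at hb; simp at hb) hst'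
      rcases hst a (Multiset.mem_cons_self _ _) m (Multiset.mem_cons_of_mem hm) with h | h
      · refine ⟨m, Multiset.mem_cons_of_mem hm, fun d hd => ?_⟩
        rcases Multiset.mem_cons.mp hd with rfl | hd
        · exact h
        · exact hmax d hd
      · refine ⟨a, Multiset.mem_cons_self _ _, fun d hd => ?_⟩
        rcases Multiset.mem_cons.mp hd with rfl | hd
        · exact Finset.Subset.refl _
        · exact (hmax d hd).trans h

lemma covers_false_iff {c : ℕ} {d : List SArc} (h : IsDiag 0 (c+1) d) {g : ℕ}
    (hg1 : 0 < g) (hg2 : g ≤ c+1) :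
    (∃ x ∈ d, x.1 < g ∧ g ≤ x.2.1 ∧ x.2.2 = false) ↔ g ∉ Apart c d := by
  constructor
  · rintro ⟨x, hx, h1, h2, h3⟩
    exact not_mem_Apart_of_cover h hx h3 h1 h2
  · intro hnm
    obtain ⟨x, hx, h1, h2⟩ := diag_cover_exists h hg1 hg2
    refine ⟨x, hx, h1, h2, ?_⟩
    cases hb : x.2.2
    · rfl
    · exact absurd (mem_Apart_of_cover h hx hb h1 h2) hnm

lemma eq_of_Apart_eq {c : ℕ} {d e : List SArc} (h1 : IsDiag 0 (c+1) d) (h2 : IsDiag 0 (c+1) e)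
    (hA : Apart c d = Apart c e) : d = e := by
  apply diag_unique h1 h2
  intro g σ hg1 hg2
  cases σ
  · rw [covers_false_iff h1 hg1 hg2, covers_false_iff h2 hg1 hg2, hA]
  · have e1 : (∃ x ∈ d, x.1 < g ∧ g ≤ x.2.1 ∧ x.2.2 = true) ↔ g ∈ Apart c d := by
      constructor
      · rintro ⟨x, hx, p1, p2, p3⟩
        exact mem_Apart_of_cover h1 hx p3 p1 p2
      · intro hm
        obtain ⟨x, hx, p3, p1, p2⟩ := mem_Apart_elim hm
        exact ⟨x, hx, p1, p2, p3⟩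
    have e2 : (∃ x ∈ e, x.1 < g ∧ g ≤ x.2.1 ∧ x.2.2 = true) ↔ g ∈ Apart c e := by
      constructor
      · rintro ⟨x, hx, p1, p2, p3⟩
        exact mem_Apart_of_cover h2 hx p3 p1 p2
      · intro hm
        obtain ⟨x, hx, p3, p1, p2⟩ := mem_Apart_elim hm
        exact ⟨x, hx, p1, p2, p3⟩
    rw [e1, e2, hA]

lemma inj_aux {c : ℕ} : ∀ (n : ℕ) (D₁ D₂ : Multiset (List SArc)),
    Multiset.card D₁ = n → (∀ d ∈ D₁, IsArcDiagram c d) → Stacked c D₁ →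
    (∀ d ∈ D₂, IsArcDiagram c d) → Stacked c D₂ → arcsOf D₁ = arcsOf D₂ → D₁ = D₂ := by
  intro n
  induction n with
  | zero =>
    intro D₁ D₂ hcard hd₁ _ hd₂ _ heq
    have h1 : D₁ = 0 := Multiset.card_eq_zero.mp hcard
    subst h1
    rcases Multiset.empty_or_exists_mem D₂ with rfl | ⟨d, hd⟩
    · rfl
    · exfalso
      have hne : d ≠ [] := (hd₂ d hd).1
      rcases d with _ | ⟨x, t⟩
      · exact hne rfl
      · have : x ∈ arcsOf D₂ := mem_arcsOf.mpr ⟨x :: t, hd, List.mem_cons_self⟩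
        rw [← heq] at this
        simp [arcsOf] at this
  | succ n ih =>
    intro D₁ D₂ hcard hd₁ hst₁ hd₂ hst₂ heq
    have hD₁ : D₁ ≠ 0 := by
      intro h
      rw [h] at hcard
      simp at hcard
    have hD₂ : D₂ ≠ 0 := by
      intro h
      obtain ⟨d, hd⟩ := Multiset.exists_mem_of_ne_zero hD₁
      have hne : d ≠ [] := (hd₁ d hd).1
      rcases d with _ | ⟨x, t⟩
      · exact hne rfl
      · have : x ∈ arcsOf D₁ := mem_arcsOf.mpr ⟨x :: t, hd, List.mem_cons_self⟩
        rw [heq, h] at this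
        simp [arcsOf] at this
    obtain ⟨m₁, hm₁, hmax₁⟩ := stacked_max hD₁ hst₁
    obtain ⟨m₂, hm₂, hmax₂⟩ := stacked_max hD₂ hst₂
    have hg₁ : IsDiag 0 (c+1) m₁ := isArcDiagram_iff.mp (hd₁ m₁ hm₁)
    have hg₂ : IsDiag 0 (c+1) m₂ := isArcDiagram_iff.mp (hd₂ m₂ hm₂)
    have hAeq : Apart c m₁ = Apart c m₂ := by
      ext g
      constructor
      · intro hg
        obtain ⟨x, hx, p⟩ := mem_Apart_elim hg
        have hxD : x ∈ arcsOf D₂ := by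
          rw [← heq]
          exact mem_arcsOf.mpr ⟨m₁, hm₁, hx⟩
        obtain ⟨d', hd', hxd⟩ := mem_arcsOf.mp hxD
        exact hmax₂ d' hd'
          (Finset.mem_filter.mpr ⟨(Finset.mem_filter.mp hg).1, x, hxd, p⟩)
      · intro hg
        obtain ⟨x, hx, p⟩ := mem_Apart_elim hg
        have hxD : x ∈ arcsOf D₁ := by
          rw [heq]
          exact mem_arcsOf.mpr ⟨m₂, hm₂, hx⟩
        obtain ⟨d', hd', hxd⟩ := mem_arcsOf.mp hxD
        exact hmax₁ d' hd'
          (Finset.mem_filter.mpr ⟨(Finset.mem_filter.mp hg).1, x, hxd, p⟩)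
    have hmeq : m₁ = m₂ := eq_of_Apart_eq hg₁ hg₂ hAeq
    subst hmeq
    obtain ⟨D₁', rfl⟩ := Multiset.exists_cons_of_mem hm₁
    obtain ⟨D₂', rfl⟩ := Multiset.exists_cons_of_mem hm₂
    have harc : arcsOf D₁' = arcsOf D₂' := by
      have e1 : arcsOf (m₁ ::ₘ D₁') = ↑m₁ + arcsOf D₁' := Multiset.cons_bind _ _ _
      have e2 : arcsOf (m₁ ::ₘ D₂') = ↑m₁ + arcsOf D₂' := Multiset.cons_bind _ _ _
      rw [e1, e2] at heq
      exact add_left_cancel heq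
    have := ih D₁' D₂' (by simpa using hcard)
      (fun d hd => hd₁ d (Multiset.mem_cons_of_mem hd))
      (fun x hx y hy => hst₁ x (Multiset.mem_cons_of_mem hx) y (Multiset.mem_cons_of_mem hy))
      (fun d hd => hd₂ d (Multiset.mem_cons_of_mem hd))
      (fun x hx y hy => hst₂ x (Multiset.mem_cons_of_mem hx) y (Multiset.mem_cons_of_mem hy))
      harc
    rw [this]

lemma exists_min_left {S : Multiset SArc} (hS : S ≠ 0) :
    ∃ m ∈ S, ∀ y ∈ S, m.1 ≤ y.1 := by
  induction S using Multiset.induction with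
  | empty => exact absurd rfl hS
  | cons a S ih =>
    rcases Multiset.empty_or_exists_mem S with rfl | ⟨b, hb⟩
    · refine ⟨a, Multiset.mem_cons_self _ _, fun y hy => ?_⟩
      rcases Multiset.mem_cons.mp hy with rfl | hy
      · exact le_refl _
      · simp at hy
    · obtain ⟨m, hm, hmin⟩ := ih (fun h => by rw [h] at hb; simp at hb)
      by_cases hc : m.1 ≤ a.1
      · refine ⟨m, Multiset.mem_cons_of_mem hm, fun y hy => ?_⟩
        rcases Multiset.mem_cons.mp hy with rfl | hy
        · exact hc
        · exact hmin y hy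
      · refine ⟨a, Multiset.mem_cons_self _ _, fun y hy => ?_⟩
        rcases Multiset.mem_cons.mp hy with rfl | hy
        · exact le_refl _
        · exact le_trans (le_of_not_ge hc) (hmin y hy)

lemma surj_aux {c : ℕ} : ∀ (k : ℕ) (A : Multiset SArc), Consistent c A → arcRank A = k →
    ∃ D : Multiset (List SArc), Multiset.card D = k ∧ (∀ d ∈ D, IsArcDiagram c d) ∧
      Stacked c D ∧ arcsOf D = A := by
  intro k
  induction k with
  | zero =>
    intro A hcons hrank
    have hA : A = 0 := by
      by_contra hne
      obtain ⟨m, hm, hmin⟩ := exists_min_left hne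
      have hmv := hcons.1 m hm
      have hm1 : m.1 ≠ 0 := by
        intro h0
        have : m ∈ A.filter (fun x => x.1 = 0) := Multiset.mem_filter.mpr ⟨hm, h0⟩
        have hpos : 0 < arcRank A := Multiset.card_pos_iff_exists_mem.mpr ⟨m, this⟩
        omega
      have hm2 : m.1 ≤ c := by
        have := hmv.1
        have := hmv.2
        omega
      have hflow := hcons.2.2 m.1 (by omega) hm2
      have hpos : 0 < Multiset.card (A.filter (fun x => x.1 = m.1)) :=
        Multiset.card_pos_iff_exists_mem.mpr ⟨m, Multiset.mem_filter.mpr ⟨hm, rfl⟩⟩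
      rw [← hflow] at hpos
      obtain ⟨w, hw⟩ := Multiset.card_pos_iff_exists_mem.mp hpos
      obtain ⟨hwA, hw2⟩ := Multiset.mem_filter.mp hw
      have hwv := (hcons.1 w hwA).1
      have hwm := hmin w hwA
      omega
    subst hA
    exact ⟨0, rfl, by simp, by intro d hd; simp at hd, by simp [arcsOf]⟩
  | succ k ih =>
    intro A hcons hrank
    set s : ℕ → Bool := fun g => decide (0 < cntS A true g) with hs_def
    have hstrue : ∀ g, s g = true ↔ 0 < cntS A true g := by
      intro g
      simp [hs_def]
    set d := buildDiag s c with hd_def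
    have hd : IsDiag 0 (c+1) d := buildDiag_isDiag s c
    have hdmem : ∀ x ∈ d, x ∈ A := by
      intro x hx
      obtain ⟨p1, p2, p3, p4, p5⟩ := buildDiag_mem x hx
      cases hσ : x.2.2
      · -- minus arc
        have hrun : ∀ g, x.1 < g → g ≤ x.2.1 → cntS A true g = 0 := by
          intro g h1 h2
          have hfalse := p3 g h1 h2
          rw [hσ] at hfalse
          by_contra hne
          have htrue : s g = true := (hstrue g).mpr (Nat.pos_of_ne_zero hne)
          rw [htrue] at hfalse
          exact Bool.noConfusion hfalse
        have hlo : x.1 = 0 ∨ 0 < cntS A true x.1 := by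
          rcases p4 with h | h
          · exact Or.inl h
          · rw [hσ] at h
            refine Or.inr ((hstrue x.1).mp ?_)
            cases hv : s x.1
            · exact absurd hv h
            · rfl
        have hhi : x.2.1 = c+1 ∨ 0 < cntS A true (x.2.1+1) := by
          rcases p5 with h | h
          · exact Or.inl h
          · rw [hσ] at h
            refine Or.inr ((hstrue (x.2.1+1)).mp ?_)
            cases hv : s (x.2.1+1)
            · exact absurd hv h
            · rfl
        have hmem := minus_arc_mem hcons hrank (Nat.succ_pos k) p1 p2 hrun hlo hhi
        have hx' : (x.1, x.2.1, false) = x := Prod.ext rfl (Prod.ext rfl hσ.symm)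
        rwa [hx'] at hmem
      · -- plus arc
        have hrun : ∀ g, x.1 < g → g ≤ x.2.1 → 0 < cntS A true g := by
          intro g h1 h2
          have := p3 g h1 h2
          rw [hσ] at this
          exact (hstrue g).mp this
        have hlo : x.1 = 0 ∨ cntS A true x.1 = 0 := by
          rcases p4 with h | h
          · exact Or.inl h
          · rw [hσ] at h
            refine Or.inr ?_
            cases hv : s x.1
            · by_contra hne
              have : s x.1 = true := (hstrue x.1).mpr (by omega)
              rw [this] at hv
              exact Bool.noConfusion hv
            · exact absurd hv h
        have hhi : x.2.1 = c+1 ∨ cntS A true (x.2.1+1) = 0 := by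
          rcases p5 with h | h
          · exact Or.inl h
          · rw [hσ] at h
            refine Or.inr ?_
            cases hv : s (x.2.1+1)
            · by_contra hne
              have : s (x.2.1+1) = true := (hstrue _).mpr (by omega)
              rw [this] at hv
              exact Bool.noConfusion hv
            · exact absurd hv h
        have hmem := plus_arc_mem hcons p1 p2 hrun hlo hhi
        have hx' : (x.1, x.2.1, true) = x := Prod.ext rfl (Prod.ext rfl hσ.symm)
        rwa [hx'] at hmem
    have hdsub : (↑d : Multiset SArc) ≤ A := by
      rw [Multiset.le_iff_count]
      intro x
      by_cases hx : x ∈ d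
      · have h1 : Multiset.count x (↑d : Multiset SArc) ≤ 1 :=
          Multiset.nodup_iff_count_le_one.mp (Multiset.coe_nodup.mpr buildDiag_nodup) x
        have h2 : 1 ≤ Multiset.count x A := Multiset.one_le_count_iff_mem.mpr (hdmem x hx)
        omega
      · rw [Multiset.count_eq_zero_of_notMem (by simpa using hx)]
        exact Nat.zero_le _
    set A' := A - (↑d : Multiset SArc) with hA'_def
    have hA'' : A = A' + ↑d := (tsub_add_cancel_of_le hdsub).symm
    have hA'sub : ∀ x ∈ A', x ∈ A := fun x hx => Multiset.mem_of_le (Multiset.sub_le_self _ _) hx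
    have hcons' : Consistent c A' := by
      refine ⟨fun x hx => hcons.1 x (hA'sub x hx),
        fun x hx y hy => hcons.2.1 x (hA'sub x hx) y (hA'sub y hy), ?_⟩
      intro g hg1 hg2
      have hflow := hcons.2.2 g hg1 hg2
      have hdflow := diag_flow (g := g) hd (a := 0) (by omega) (by omega)
      have e1 : Multiset.card (A.filter (fun x => x.2.1 = g)) =
          Multiset.card (A'.filter (fun x => x.2.1 = g)) +
          Multiset.card (Multiset.filter (fun x : SArc => x.2.1 = g) (↑d : Multiset SArc)) := by
        rw [hA'', Multiset.filter_add, Multiset.card_add]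
      have e2 : Multiset.card (A.filter (fun x => x.1 = g)) =
          Multiset.card (A'.filter (fun x => x.1 = g)) +
          Multiset.card (Multiset.filter (fun x : SArc => x.1 = g) (↑d : Multiset SArc)) := by
        rw [hA'', Multiset.filter_add, Multiset.card_add]
      omega
    have hrank' : arcRank A' = k := by
      have hdr : Multiset.card (Multiset.filter (fun x : SArc => x.1 = 0)
          (↑d : Multiset SArc)) = 1 := diag_rank hd
      have e2 : arcRank A = arcRank A' + 1 := by
        rw [arcRank, arcRank, hA'', Multiset.filter_add, Multiset.card_add, hdr]
      omega
    obtain ⟨D', hcard', hdiag', hstack', harcs'⟩ := ih A' hcons' hrank'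
    have hsub' : ∀ d'' ∈ D', Apart c d'' ⊆ Apart c d := by
      intro d'' hd'' g hg
      obtain ⟨hicc, x, hxd, hxσ, hx1, hx2⟩ := Finset.mem_filter.mp hg
      have hxA : x ∈ A := hA'sub x (by rw [← harcs']; exact mem_arcsOf.mpr ⟨d'', hd'', hxd⟩)
      have hpos : 0 < cntS A true g := Multiset.card_pos_iff_exists_mem.mpr
        ⟨x, Multiset.mem_filter.mpr ⟨hxA, hxσ, hx1, hx2⟩⟩
      rw [hd_def, buildDiag_Apart]
      exact Finset.mem_filter.mpr ⟨hicc, (hstrue g).mpr hpos⟩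
    refine ⟨d ::ₘ D', by simp [hcard'], ?_, ?_, ?_⟩
    · intro e he
      rcases Multiset.mem_cons.mp he with rfl | he
      · exact isArcDiagram_iff.mpr hd
      · exact hdiag' e he
    · intro e₁ he₁ e₂ he₂
      rcases Multiset.mem_cons.mp he₁ with rfl | he₁ <;> rcases Multiset.mem_cons.mp he₂ with rfl | he₂
      · exact Or.inl (Finset.Subset.refl _)
      · exact Or.inr (hsub' e₂ he₂)
      · exact Or.inl (hsub' e₁ he₁)
      · exact hstack' e₁ he₁ e₂ he₂
    · rw [arcsOf, Multiset.cons_bind, ← arcsOf, harcs', hA'']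
      exact add_comm _ _

/-- taking multiset unions of arcs is a bijection from multisets of
`k` stacked arc diagrams onto consistent rank-`k` multisets of signed arcs. -/
theorem statement14 (c k : ℕ) (hc : 1 ≤ c) :
    Set.BijOn arcsOf
      {D : Multiset (List SArc) |
        Multiset.card D = k ∧ (∀ d ∈ D, IsArcDiagram c d) ∧ Stacked c D}
      {A : Multiset SArc | Consistent c A ∧ arcRank A = k} := by
  refine ⟨?_, ?_, ?_⟩
  · rintro D ⟨hcard, hdiag, hstack⟩
    exact mapsTo_aux hcard hdiag hstack
  · rintro D₁ ⟨hc₁, hd₁, hs₁⟩ D₂ ⟨hc₂, hd₂, hs₂⟩ heq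
    exact inj_aux k D₁ D₂ hc₁ hd₁ hs₁ hd₂ hs₂ heq
  · rintro A ⟨hcons, hrank⟩
    obtain ⟨D, h1, h2, h3, h4⟩ := surj_aux k A hcons hrank
    exact ⟨D, ⟨h1, h2, h3⟩, h4⟩

end PaperDKK
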